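/- Let M = [[A, B], [C, D]] over a commutative ring R, X, Y ∈ R^{n×n} both regular, f ∈ R, à = f·I_n - X·A·Y, and a(x) ∈ R[x] nonzero with a(Ã) = 0. Set P = Y · p(f, Ã; a) · X and S = a(f)·D - C·P·B. Then a(f)^s · det(M) = det(A) · det(S). -/

import Mathlib

/-! With `Ã = f·1 - X A Y`, the telescoping identity `(Σ_{i<k} f^i Ã^{k-1-i}) (f·1 - Ã) = f^k·1 - Ã^k`
summed against the coefficients of `a` and combined with `a(Ã) = 0` gives `p(f, Ã; a) · X A Y = a(f)·1`.
Cancelling the regular matrix `Y` on the right turns this into `P A = a(f)·1`. Multiplying `M` on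
the left by the block lower-triangular matrix `[[1, 0], [-C P, a(f)·1]]`, of determinant `a(f)^s`,
eliminates the block `C` and leaves the block upper-triangular matrix `[[A, B], [0, S]]`. -/

open Finset

/-- An element of a commutative ring is regular if it is nonzero and not a zero divisor. -/
def IsRegularElem {R : Type*} [CommRing R] (r : R) : Prop :=
  r ≠ 0 ∧ ∀ s : R, r * s = 0 → s = 0

theorem sum_smul_geom_sum₂_mul_sub {R 𝒜 : Type*} [CommRing R] [Ring 𝒜] [Algebra R 𝒜]
    (d : ℕ) (a : ℕ → R) (f : R) (T : 𝒜) :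
    (∑ k ∈ range (d + 1), a k • ∑ i ∈ range k, f ^ i • T ^ (k - 1 - i)) * (f • (1 : 𝒜) - T) =
      (∑ k ∈ range (d + 1), a k * f ^ k) • (1 : 𝒜) - ∑ k ∈ range (d + 1), a k • T ^ k := by
  have geom (k : ℕ) :
      (∑ i ∈ range k, f ^ i • T ^ (k - 1 - i)) * (f • (1 : 𝒜) - T) = f ^ k • (1 : 𝒜) - T ^ k := by
    simpa only [smul_pow, one_pow, smul_one_mul] using
      ((Commute.one_left T).smul_left f).geom_sum₂_mul k
  simp only [sum_mul, smul_mul_assoc, geom, smul_sub, smul_smul, sum_sub_distrib, sum_smul]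

theorem Matrix.mul_eq_smul_one_of_mul_mul_mul_eq {R n : Type*} [CommRing R] [Fintype n]
    [DecidableEq n] {Q X A Y : Matrix n n R} {c : R} (hY : IsLeftRegular Y.det)
    (h : Q * (X * A * Y) = c • 1) : Y * Q * X * A = c • 1 :=
  (isRegular_of_isLeftRegular_det hY).right <| by
    simp only [mul_assoc] at h ⊢
    rw [h, Matrix.mul_smul, Matrix.mul_one, Matrix.smul_mul, Matrix.one_mul]

theorem Matrix.pow_card_mul_det_fromBlocks {R m n : Type*} [CommRing R] [Fintype m] [Fintype n]
    [DecidableEq m] [DecidableEq n] {A P : Matrix m m R} {c : R} (B : Matrix m n R)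
    (C : Matrix n m R) (D : Matrix n n R) (hPA : P * A = c • 1) :
    c ^ Fintype.card n * (fromBlocks A B C D).det = A.det * (c • D - C * P * B).det := by
  have elim : fromBlocks 1 0 (-(C * P)) (c • 1) * fromBlocks A B C D =
      fromBlocks A B 0 (c • D - C * P * B) := by
    simp only [fromBlocks_multiply, Matrix.neg_mul, Matrix.mul_assoc, hPA, Matrix.one_mul,
      Matrix.zero_mul, add_zero, Matrix.mul_smul, Matrix.mul_one, Matrix.smul_mul, neg_add_cancel,
      neg_add_eq_sub]
  have hdet := congrArg det elim
  rwa [det_mul, det_fromBlocks_zero₁₂, det_fromBlocks_zero₂₁, det_one, one_mul, det_smul, det_one,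
    mul_one] at hdet

theorem stmt13_general {R : Type*} [CommRing R] {n s : ℕ} (d : ℕ) (a : ℕ → R) (f : R)
    (A X Y : Matrix (Fin n) (Fin n) R) (B : Matrix (Fin n) (Fin s) R)
    (C : Matrix (Fin s) (Fin n) R) (D : Matrix (Fin s) (Fin s) R)
    (hY : IsRegularElem Y.det)
    (hann : ∑ k ∈ Finset.range (d + 1),
        a k • (f • (1 : Matrix (Fin n) (Fin n) R) - X * A * Y) ^ k = 0) :
    (∑ k ∈ Finset.range (d + 1), a k * f ^ k) ^ s * (Matrix.fromBlocks A B C D).det =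
      A.det *
        ((∑ k ∈ Finset.range (d + 1), a k * f ^ k) • D -
          C * (Y * (∑ k ∈ Finset.range (d + 1),
              a k • ∑ i ∈ Finset.range k,
                f ^ i • (f • (1 : Matrix (Fin n) (Fin n) R) - X * A * Y) ^ (k - 1 - i)) * X)
            * B).det := by
  have hpXAY := sum_smul_geom_sum₂_mul_sub d a f (f • (1 : Matrix (Fin n) (Fin n) R) - X * A * Y)
  rw [sub_sub_cancel, hann, sub_zero] at hpXAY
  have hPA := Matrix.mul_eq_smul_one_of_mul_mul_mul_eq
    (isLeftRegular_iff_right_eq_zero_of_mul.mpr hY.2) hpXAY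
  simpa only [Fintype.card_fin, Matrix.mul_assoc] using Matrix.pow_card_mul_det_fromBlocks B C D hPA

/-- Theorem (basic): with `Ã = f·I - X·A·Y` annihilated by `a`, `X, Y` regular,
`P = Y·p(f, Ã; a)·X` and `S = a(f)·D - C·P·B`, we get
`a(f)^s · det M = det A · det S`. -/
theorem stmt13 {R : Type*} [CommRing R] {n s : ℕ} (d : ℕ) (a : ℕ → R) (f : R)
    (A X Y : Matrix (Fin n) (Fin n) R) (B : Matrix (Fin n) (Fin s) R)
    (C : Matrix (Fin s) (Fin n) R) (D : Matrix (Fin s) (Fin s) R)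
    (hX : IsRegularElem X.det) (hY : IsRegularElem Y.det)
    (hane : ∃ k, k ≤ d ∧ a k ≠ 0)
    (hann : ∑ k ∈ Finset.range (d + 1),
        a k • (f • (1 : Matrix (Fin n) (Fin n) R) - X * A * Y) ^ k = 0) :
    (∑ k ∈ Finset.range (d + 1), a k * f ^ k) ^ s * (Matrix.fromBlocks A B C D).det =
      A.det *
        ((∑ k ∈ Finset.range (d + 1), a k * f ^ k) • D -
          C * (Y * (∑ k ∈ Finset.range (d + 1),
              a k • ∑ i ∈ Finset.range k,
                f ^ i • (f • (1 : Matrix (Fin n) (Fin n) R) - X * A * Y) ^ (k - 1 - i)) * X)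
            * B).det :=
  stmt13_general d a f A X Y B C D hY hann
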